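/- Let $p \geq 2$ be an integer, $L > 0$, and let $\lambda_1, \ldots, \lambda_T > 0$ and $r_1, \ldots, r_T \geq 0$ satisfy $\tfrac{p!}{(20p-8)L} \leq \lambda_k r_k^{p-1}$ for all $k$ and $\sum_{k=1}^T r_k^2 \leq R^2$ for some $R > 0$. Then $\sum_{k=1}^T \lambda_k \geq \tfrac{p!}{(20p-8)L} R^{-(p-1)} T^{(p+1)/2}$. -/
import Mathlib

theorem stmt3 (p : ℕ) (hp : 2 ≤ p) (L R : ℝ) (hL : 0 < L) (hR : 0 < R)
    (T : ℕ) (lam r : Fin T → ℝ) (hlam : ∀ k, 0 < lam k) (hr : ∀ k, 0 ≤ r k)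
    (hlow : ∀ k, (p.factorial : ℝ) / ((20 * p - 8) * L) ≤ lam k * r k ^ (p - 1))
    (hsum : ∑ k, r k ^ 2 ≤ R ^ 2) :
    (p.factorial : ℝ) / ((20 * p - 8) * L) * R ^ (-((p : ℝ) - 1))
      * (T : ℝ) ^ (((p : ℝ) + 1) / 2) ≤ ∑ k, lam k := by
  set c : ℝ := (p.factorial : ℝ) / ((20 * p - 8) * L) with hc_def
  have hp1 : (1 : ℝ) ≤ (p : ℝ) := by exact_mod_cast Nat.one_le_of_lt hp
  have hc : 0 < c := by
    apply div_pos (by positivity)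
    have : (2:ℝ) ≤ (p:ℝ) := by exact_mod_cast hp
    nlinarith
  rcases Nat.eq_zero_or_pos T with hT0 | hTpos
  · subst hT0
    simp only [Nat.cast_zero, Finset.univ_eq_empty, Finset.sum_empty]
    rw [Real.zero_rpow (by positivity)]
    simp
  have hT : (0:ℝ) < T := by exact_mod_cast hTpos
  have hne : Nonempty (Fin T) := Fin.pos_iff_nonempty.mp hTpos
  have hrpos : ∀ k, 0 < r k := by
    intro k
    rcases (hr k).lt_or_eq with h | h
    · exact h
    · exfalso
      have := hlow k
      rw [← h, zero_pow (by omega), mul_zero] at this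
      linarith
  -- step A : c * (r k) ^ (-(p-1) : ℤ) ≤ lam k
  have hA : ∀ k, c * (r k) ^ (-((p:ℤ) - 1)) ≤ lam k := by
    intro k
    have hrk := hrpos k
    have h1 : c ≤ lam k * r k ^ (p - 1) := hlow k
    have hz : (r k) ^ (-((p:ℤ) - 1)) = ((r k) ^ (p - 1))⁻¹ := by
      rw [zpow_neg, ← zpow_natCast]
      congr 2
      omega
    rw [hz, mul_inv_le_iff₀ (by positivity)]
    linarith [h1]
  have hB : c * ∑ k, (r k) ^ (-((p:ℤ) - 1)) ≤ ∑ k, lam k := by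
    rw [Finset.mul_sum]
    exact Finset.sum_le_sum fun k _ => hA k
  -- Jensen
  set S : ℝ := ∑ k, r k with hS_def
  have hSpos : 0 < S := Finset.sum_pos (fun k _ => hrpos k) Finset.univ_nonempty
  have hJ : (S / T) ^ (-((p:ℤ) - 1)) ≤ (T:ℝ)⁻¹ * ∑ k, (r k) ^ (-((p:ℤ) - 1)) := by
    have := Real.zpow_arith_mean_le_arith_mean_zpow (s := Finset.univ)
      (fun _ : Fin T => (T:ℝ)⁻¹) r (fun _ _ => by positivity)
      (by simp [Finset.card_univ]; field_simp) (fun k _ => hrpos k) (-((p:ℤ) - 1))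
    calc (S / T) ^ (-((p:ℤ) - 1)) = (∑ k, (T:ℝ)⁻¹ * r k) ^ (-((p:ℤ) - 1)) := by
          rw [← Finset.mul_sum, div_eq_inv_mul]
      _ ≤ ∑ k, (T:ℝ)⁻¹ * (r k) ^ (-((p:ℤ) - 1)) := this
      _ = (T:ℝ)⁻¹ * ∑ k, (r k) ^ (-((p:ℤ) - 1)) := by rw [← Finset.mul_sum]
  -- Cauchy-Schwarz : S ≤ √T * R
  set s : ℝ := Real.sqrt T with hs_def
  have hs : 0 < s := Real.sqrt_pos.mpr hT
  have hs2 : s ^ 2 = (T:ℝ) := Real.sq_sqrt hT.le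
  have hCS : S ≤ s * R := by
    have h1 : S ^ 2 ≤ (T:ℝ) * ∑ k, r k ^ 2 := by
      have := sq_sum_le_card_mul_sum_sq (s := Finset.univ) (f := r)
      simpa [Finset.card_univ] using this
    nlinarith [mul_pos hs hR]
  set m : ℕ := p - 1 with hm_def
  have hm1 : m + 2 = p + 1 := by omega
  -- rewrite the goal
  have hgoal : c * R ^ (-((p : ℝ) - 1)) * (T : ℝ) ^ (((p : ℝ) + 1) / 2)
      = c * (R ^ m)⁻¹ * s ^ (p + 1) := by
    congr 1
    · congr 1
      rw [show -((p:ℝ) - 1) = -((m:ℕ):ℝ) by push_cast [hm_def, Nat.cast_sub (by omega : 1 ≤ p)]; ring,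
        Real.rpow_neg hR.le, Real.rpow_natCast]
    · rw [hs_def, Real.sqrt_eq_rpow, ← Real.rpow_natCast ((T:ℝ) ^ ((1:ℝ)/2)) (p+1),
        ← Real.rpow_mul hT.le]
      congr 1
      push_cast
      ring
  rw [hgoal]
  -- main chain
  have key1 : ((T:ℝ) / S) ^ m = (S / T) ^ (-((p:ℤ) - 1)) := by
    rw [show -((p:ℤ) - 1) = -(m:ℤ) by omega, zpow_neg, ← inv_zpow, inv_div, zpow_natCast]
  have key2 : ((T:ℝ) / (s * R)) ^ m ≤ ((T:ℝ) / S) ^ m := by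
    apply pow_le_pow_left₀ (by positivity)
    apply div_le_div_of_nonneg_left hT.le hSpos hCS
  have key3 : c * (R ^ m)⁻¹ * s ^ (p + 1) = c * T * ((T:ℝ) / (s * R)) ^ m := by
    rw [← hs2, ← hm1, div_pow, mul_pow, ← pow_mul]
    field_simp
    ring_nf
  calc c * (R ^ m)⁻¹ * s ^ (p + 1) = c * T * ((T:ℝ) / (s * R)) ^ m := key3
    _ ≤ c * T * ((T:ℝ) / S) ^ m := by
        apply mul_le_mul_of_nonneg_left key2 (by positivity)
    _ = c * T * (S / T) ^ (-((p:ℤ) - 1)) := by rw [key1]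
    _ ≤ c * T * ((T:ℝ)⁻¹ * ∑ k, (r k) ^ (-((p:ℤ) - 1))) := by
        apply mul_le_mul_of_nonneg_left hJ (by positivity)
    _ = c * ∑ k, (r k) ^ (-((p:ℤ) - 1)) := by field_simp
    _ ≤ ∑ k, lam k := hB
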